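/- Let λ > 1 be a natural number, f = E_λ, 0 < θ < 1, and v ∈ C^{1+ε}(S¹) with max|v| = M, Hölder constant Γ₂ for v', and suppose there is c with v'(c) > 0 such that, with δ₁ = 6M / ((1−λ^{-θ}) v'(c) λ^θ) and δ₂ = (v'(c)/(6Γ₂))^{1/ε}, one has δ₁ ≤ δ₂ ≤ 1 and v'(c)/3 > 2M'/((1−λ^{θ-1})λ^{1-θ}) where M' = max|v'|. Then for every x whose forward orbit under f is dense (hence Lebesgue-a.e. x) and every ĥ > 0, there exists 0 < h < ĥ with |α(x) − α(x+h)| ≥ C₀ h^θ, where C₀ = (6M/(1−λ^{-θ}))^{1-θ} λ^{-2θ+θ²}(v'(c))^θ / 12 and α is the unique bounded solution of the twisted cohomological equation. In particular, α is not (θ+γ)-Hölder at x for any γ > 0. -/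

import Mathlib

open Real Filter Set Topology

/-!
Put `q = b^{-θ}` and `S y = ∑ v(bⁱ y) q^{i+1}`, so that `α = -S`. Given `ĥ`, density of the
orbit gives a large `n` with `bⁿ x` within `δ₂` of `c` modulo 1; take `h = δ₁ / bⁿ`. In
`S (x + h) - S x`, the `n`-th term is at least `(2/3) v'(c) δ₁ q^{n+1}`: by Hölder continuity of
`v'` and `ε ≤ 1`, `v' ≥ 2 v'(c) / 3` within `2 δ₂` of `c`, and the mean value theorem applies.
The earlier terms form, by the Lipschitz bound `M'`, a sum dominated by a geometric series of
ratio `bq = b^{1-θ} > 1`, hence by its last term; the condition on `M'` makes them at most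
`(1/6) v'(c) δ₁ q^{n+1}`. The later terms are at most `2 M q^{n+2} / (1 - q)` in total. The
choice of `δ₁` gives `v'(c) δ₁ q^{n+1} = 6 M q^{n+2} / (1 - q)`, so the difference is at least
`M q^{n+2} / (1 - q) = 2 C₀ h^θ`.
-/

theorem Function.Periodic.deriv {𝕜 F : Type*} [NontriviallyNormedField 𝕜] [NormedAddCommGroup F]
    [NormedSpace 𝕜 F] {f : 𝕜 → F} {c : 𝕜} (hf : Function.Periodic f c) :
    Function.Periodic (_root_.deriv f) c := fun x => by
  rw [← deriv_comp_add_const, show (fun y => f (y + c)) = f from funext hf]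

theorem Function.Periodic.abs_sub_le_of_holder {g : ℝ → ℝ} (hg : Function.Periodic g 1)
    {Γ ε : ℝ} (hΓ : ∀ u w, |g u - g w| ≤ Γ * |u - w| ^ ε) (u w : ℝ) (k : ℤ) :
    |g u - g w| ≤ Γ * |u - k - w| ^ ε := by
  have := hΓ (u - k * 1) w
  rwa [hg.sub_int_mul_eq, mul_one] at this

theorem frequently_mem_of_subset_closure_range {X : Type*} [TopologicalSpace X] [T1Space X]
    {u : ℕ → X} {U : Set X} (hU : IsOpen U) (hUinf : U.Infinite) (hUu : U ⊆ closure (range u)) :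
    ∃ᶠ n in atTop, u n ∈ U := by
  refine frequently_atTop.mpr fun N => ?_
  by_contra! hN
  have hF : (u '' Iio N).Finite := (finite_Iio N).image u
  obtain ⟨y, hyU, hyF⟩ := (hUinf.sdiff hF).nonempty
  obtain ⟨_, hnU, n, rfl⟩ :=
    mem_closure_iff.mp (hUu hyU) _ (hU.sdiff hF.isClosed) ⟨hyU, hyF⟩
  rcases lt_or_ge n N with hn | hn
  · exact hnU.2 ⟨n, hn, rfl⟩
  · exact hN n hn hnU.1

theorem exists_ge_abs_sub_lt_of_Icc_subset_closure_range {u : ℕ → ℝ}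
    (hu : Icc 0 1 ⊆ closure (range u)) {y η : ℝ} (hy : y ∈ Ico (0 : ℝ) 1) (hη : 0 < η)
    (N : ℕ) : ∃ n ≥ N, |u n - y| < η := by
  have hlt : y < min (y + η) 1 := lt_min (by linarith) hy.2
  have hsub : Ioo y (min (y + η) 1) ⊆ Icc 0 1 :=
    fun z hz => ⟨hy.1.trans hz.1.le, hz.2.le.trans (min_le_right _ _)⟩
  obtain ⟨n, hnN, hn⟩ := frequently_atTop.mp
    (frequently_mem_of_subset_closure_range isOpen_Ioo (Ioo_infinite hlt) (hsub.trans hu)) N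
  refine ⟨n, hnN, abs_sub_lt_iff.mpr ⟨?_, ?_⟩⟩ <;>
    linarith [hn.1, hn.2.trans_le (min_le_left _ _)]

theorem abs_sub_le_of_abs_deriv_le {v : ℝ → ℝ} {L : ℝ} (hv : Differentiable ℝ v)
    (hL : ∀ y, |deriv v y| ≤ L) (a b : ℝ) : |v b - v a| ≤ L * |b - a| :=
  convex_univ.norm_image_sub_le_of_norm_deriv_le (fun y _ => hv y) (fun y _ => hL y)
    (mem_univ a) (mem_univ b)

theorem two_thirds_mul_le_sub_of_fract_near {v : ℝ → ℝ} {Γ ε δ δ' c t : ℝ}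
    (hv : Differentiable ℝ v) (hper : Function.Periodic (deriv v) 1)
    (hΓ : ∀ u w, |deriv v u - deriv v w| ≤ Γ * |u - w| ^ ε) (hΓ0 : 0 ≤ Γ)
    (hε0 : 0 < ε) (hε1 : ε ≤ 1) (hδ : 0 ≤ δ) (hδδ' : δ ≤ δ')
    (hδ' : 6 * Γ * δ' ^ ε ≤ deriv v c) (ht : |Int.fract t - Int.fract c| < δ') :
    2 * deriv v c / 3 * δ ≤ v (t + δ) - v t := by
  have hδ'0 : 0 ≤ δ' := (abs_nonneg _).trans ht.le
  have hderiv : ∀ ξ ∈ interior (Icc t (t + δ)), 2 * deriv v c / 3 ≤ deriv v ξ := by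
    intro ξ hξ
    rw [interior_Icc] at hξ
    have hdist : |ξ - ((⌊t⌋ - ⌊c⌋ : ℤ) : ℝ) - c| ≤ 2 * δ' := by
      have hsplit : ξ - ((⌊t⌋ - ⌊c⌋ : ℤ) : ℝ) - c = (ξ - t) + (Int.fract t - Int.fract c) := by
        simp only [Int.fract]; push_cast; ring
      rw [hsplit]
      refine (abs_add_le _ _).trans ?_
      rw [abs_of_pos (sub_pos.mpr hξ.1)]
      linarith [hξ.2]
    have hholder : Γ * |ξ - ((⌊t⌋ - ⌊c⌋ : ℤ) : ℝ) - c| ^ ε ≤ deriv v c / 3 :=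
      calc Γ * |ξ - ((⌊t⌋ - ⌊c⌋ : ℤ) : ℝ) - c| ^ ε ≤ Γ * (2 * δ') ^ ε := by gcongr
        _ = 2 ^ ε * (Γ * δ' ^ ε) := by
          rw [mul_rpow zero_le_two hδ'0]; ring
        _ ≤ 2 * (Γ * δ' ^ ε) := mul_le_mul_of_nonneg_right
          (by simpa using rpow_le_rpow_of_exponent_le one_le_two hε1) (by positivity)
        _ ≤ deriv v c / 3 := by linarith
    have := (hper.abs_sub_le_of_holder hΓ ξ c (⌊t⌋ - ⌊c⌋)).trans hholder
    linarith [(abs_le.mp this).1]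
  have := (convex_Icc t (t + δ)).mul_sub_le_image_sub_of_le_deriv hv.continuous.continuousOn
    hv.differentiableOn hderiv t (left_mem_Icc.2 (by linarith)) (t + δ)
    (right_mem_Icc.2 (by linarith)) (by linarith)
  simpa using this

theorem summable_mul_pow_succ {f : ℕ → ℝ} {K q : ℝ} (hf : ∀ i, |f i| ≤ K) (hq0 : 0 ≤ q)
    (hq1 : q < 1) : Summable fun i => f i * q ^ (i + 1) := by
  refine .of_norm_bounded ((summable_geometric_of_lt_one hq0 hq1).mul_left (K * q)) fun i => ?_
  rw [norm_mul, norm_pow, norm_eq_abs, norm_eq_abs, abs_of_nonneg hq0]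
  calc |f i| * q ^ (i + 1) ≤ K * q ^ (i + 1) := by gcongr; exact hf i
    _ = K * q * q ^ i := by ring

theorem abs_tsum_mul_pow_le {f : ℕ → ℝ} {K q : ℝ} (hf : ∀ i, |f i| ≤ K) (hq0 : 0 ≤ q)
    (hq1 : q < 1) (m : ℕ) :
    |∑' i, f (i + m) * q ^ (i + m + 1)| ≤ K * q ^ (m + 1) / (1 - q) := by
  rw [← norm_eq_abs, div_eq_mul_inv]
  refine tsum_of_norm_bounded ((hasSum_geometric_of_lt_one hq0 hq1).mul_left (K * q ^ (m + 1)))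
    fun i => ?_
  rw [norm_mul, norm_pow, norm_eq_abs, norm_eq_abs, abs_of_nonneg hq0]
  calc |f (i + m)| * q ^ (i + m + 1) ≤ K * q ^ (i + m + 1) := by gcongr; exact hf _
    _ = K * q ^ (m + 1) * q ^ i := by ring

theorem abs_sum_range_sub_mul_pow_le {v : ℝ → ℝ} {B q L : ℝ} (hv : Differentiable ℝ v)
    (hL : ∀ y, |deriv v y| ≤ L) (hB : 0 ≤ B) (hq : 0 ≤ q) (hBq : 1 < B * q) (x : ℝ) {h : ℝ}
    (hh : 0 ≤ h) (n : ℕ) :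
    |∑ i ∈ Finset.range n, (v (B ^ i * (x + h)) - v (B ^ i * x)) * q ^ (i + 1)| ≤
      L * h * q * (B * q) ^ n / (B * q - 1) := by
  have hL0 : 0 ≤ L := (abs_nonneg _).trans (hL 0)
  calc _ ≤ ∑ i ∈ Finset.range n, L * h * q * (B * q) ^ i := by
        refine (Finset.abs_sum_le_sum_abs _ _).trans (Finset.sum_le_sum fun i _ => ?_)
        have hlip := abs_sub_le_of_abs_deriv_le hv hL (B ^ i * x) (B ^ i * (x + h))
        rw [show B ^ i * (x + h) - B ^ i * x = B ^ i * h by ring,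
          abs_of_nonneg (by positivity : 0 ≤ B ^ i * h)] at hlip
        rw [abs_mul, abs_of_nonneg (by positivity : 0 ≤ q ^ (i + 1))]
        calc _ ≤ L * (B ^ i * h) * q ^ (i + 1) := by gcongr
          _ = L * h * q * (B * q) ^ i := by ring
    _ = L * h * q * ((B * q) ^ n - 1) / (B * q - 1) := by
        rw [← Finset.mul_sum, geom_sum_eq hBq.ne']; ring
    _ ≤ _ := by gcongr; linarith

noncomputable def discountedOrbitSum (v : ℝ → ℝ) (B q y : ℝ) : ℝ :=
  ∑' i : ℕ, v (B ^ i * y) * q ^ (i + 1)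

theorem le_discountedOrbitSum_sub {v : ℝ → ℝ} {B q M L D δ x : ℝ} (hv : Differentiable ℝ v)
    (hM : ∀ y, |v y| ≤ M) (hL : ∀ y, |deriv v y| ≤ L) (hB : 0 ≤ B) (hq0 : 0 ≤ q) (hq1 : q < 1)
    (hBq : 1 < B * q) (hLD : L / (B * q - 1) ≤ D / 6) (hδ : 0 ≤ δ)
    (hDδ : D * δ * (1 - q) = 6 * M * q) (n : ℕ)
    (hmain : 2 * D / 3 * δ ≤ v (B ^ n * x + δ) - v (B ^ n * x)) :
    M * q ^ (n + 2) / (1 - q) ≤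
      discountedOrbitSum v B q (x + δ / B ^ n) - discountedOrbitSum v B q x := by
  have hBn : B ^ n ≠ 0 := pow_ne_zero _ (by rintro rfl; linarith)
  set h := δ / B ^ n
  have hh : B ^ n * h = δ := mul_div_cancel₀ δ hBn
  have hΔ : ∀ j, |v (B ^ j * (x + h)) - v (B ^ j * x)| ≤ 2 * M := fun j =>
    (abs_sub _ _).trans (by linarith [hM (B ^ j * (x + h)), hM (B ^ j * x)])
  set d : ℕ → ℝ := fun i => (v (B ^ i * (x + h)) - v (B ^ i * x)) * q ^ (i + 1)
  have hsplit : discountedOrbitSum v B q (x + h) - discountedOrbitSum v B q x =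
      ∑ i ∈ Finset.range n, d i + d n + ∑' i, d (i + (n + 1)) := by
    rw [← Finset.sum_range_succ, (summable_mul_pow_succ hΔ hq0 hq1).sum_add_tsum_nat_add,
      discountedOrbitSum, discountedOrbitSum, ← Summable.tsum_sub
        (summable_mul_pow_succ (fun j => hM _) hq0 hq1)
        (summable_mul_pow_succ (fun j => hM _) hq0 hq1)]
    exact tsum_congr fun i => by ring
  have hhead : |∑ i ∈ Finset.range n, d i| ≤ D / 6 * δ * q ^ (n + 1) :=
    calc _ ≤ L * h * q * (B * q) ^ n / (B * q - 1) :=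
          abs_sum_range_sub_mul_pow_le hv hL hB hq0 hBq x (by positivity) n
      _ = L / (B * q - 1) * (B ^ n * h) * q ^ (n + 1) := by ring
      _ ≤ D / 6 * δ * q ^ (n + 1) := by rw [hh]; gcongr
  have htail : |∑' i, d (i + (n + 1))| ≤ 2 * (M * q ^ (n + 2) / (1 - q)) :=
    (abs_tsum_mul_pow_le hΔ hq0 hq1 (n + 1)).trans_eq (by ring)
  have hdn : 2 * D / 3 * δ * q ^ (n + 1) ≤ d n := by
    simp only [d, mul_add, hh]
    gcongr
  have hscale : D * δ * q ^ (n + 1) = 6 * (M * q ^ (n + 2) / (1 - q)) := by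
    have : 1 - q ≠ 0 := by linarith
    field_simp
    linear_combination q ^ (n + 1) * hDδ
  rw [hsplit]
  linarith [(abs_le.mp hhead).1, (abs_le.mp htail).1]

theorem exists_lt_le_discountedOrbitSum_sub {v : ℝ → ℝ} {B q M L Γ ε δ δ' c x ĥ : ℝ}
    (hv : Differentiable ℝ v) (hper : Function.Periodic (deriv v) 1) (hM : ∀ y, |v y| ≤ M)
    (hL : ∀ y, |deriv v y| ≤ L) (hΓ : ∀ u w, |deriv v u - deriv v w| ≤ Γ * |u - w| ^ ε)
    (hΓ0 : 0 ≤ Γ) (hε0 : 0 < ε) (hε1 : ε ≤ 1) (hq0 : 0 ≤ q) (hq1 : q < 1) (hBq : 1 < B * q)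
    (hLD : L / (B * q - 1) ≤ deriv v c / 6) (hδ : 0 < δ) (hδδ' : δ ≤ δ')
    (hδ' : 6 * Γ * δ' ^ ε ≤ deriv v c) (hDδ : deriv v c * δ * (1 - q) = 6 * M * q)
    (hx : Icc 0 1 ⊆ closure (range fun k : ℕ => Int.fract (B ^ k * x))) (hĥ : 0 < ĥ) :
    ∃ n : ℕ, δ / B ^ n < ĥ ∧ M * q ^ (n + 2) / (1 - q) ≤
      discountedOrbitSum v B q (x + δ / B ^ n) - discountedOrbitSum v B q x := by
  have hB : 1 < B := by nlinarith
  obtain ⟨N, hN⟩ := pow_unbounded_of_one_lt (δ / ĥ) hB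
  obtain ⟨n, hnN, hn⟩ := exists_ge_abs_sub_lt_of_Icc_subset_closure_range hx
    ⟨Int.fract_nonneg c, Int.fract_lt_one c⟩ (hδ.trans_le hδδ') N
  refine ⟨n, ?_, le_discountedOrbitSum_sub hv hM hL (by linarith) hq0 hq1 hBq hLD hδ.le hDδ n
    (two_thirds_mul_le_sub_of_fract_near hv hper hΓ hΓ0 hε0 hε1 hδ.le hδδ' hδ' hn)⟩
  calc δ / B ^ n ≤ δ / B ^ N := by gcongr; exact hB.le
    _ < ĥ := by rwa [div_lt_iff₀ (by positivity), ← div_lt_iff₀' hĥ]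

theorem rpow_neg_mul_natCast_add_one {B : ℝ} (hB : 0 ≤ B) (θ : ℝ) (i : ℕ) :
    B ^ (-(θ * ((i : ℝ) + 1))) = (B ^ (-θ)) ^ (i + 1) := by
  rw [← rpow_mul_natCast hB]
  push_cast
  ring_nf

theorem one_sub_rpow_sub_one_mul_rpow {B : ℝ} (hB : 0 < B) (θ : ℝ) :
    (1 - B ^ (θ - 1)) * B ^ (1 - θ) = B ^ (1 - θ) - 1 := by
  rw [sub_mul, one_mul, ← rpow_add hB, sub_add_sub_cancel', sub_self, rpow_zero]

-- `C₀ hᶿ` at `h = δ / Bⁿ`, where `K = 6M / (1 - B^{-θ})`.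
theorem const_mul_div_pow_rpow_eq {B θ K D δ : ℝ} (hB : 0 < B) (hK : 0 < K) (hD : 0 < D)
    (hδ : δ * D = K * B ^ (-θ)) (n : ℕ) :
    K ^ (1 - θ) * B ^ (-2 * θ + θ ^ 2) * D ^ θ / 12 * (δ / B ^ n) ^ θ =
      K * (B ^ (-θ)) ^ (n + 2) / 12 := by
  have hδ' : δ = K * B ^ (-θ) / D := by rw [← hδ]; field_simp
  have hK1 : K ^ (1 - θ) * K ^ θ = K := by rw [← rpow_add hK, sub_add_cancel, rpow_one]
  have hB2 : B ^ (-2 * θ + θ ^ 2) * (B ^ (-θ)) ^ θ = (B ^ (-θ)) ^ 2 := by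
    rw [← rpow_mul hB.le, ← rpow_add hB, ← rpow_mul_natCast hB.le]
    ring_nf
  have hBn : (B ^ n) ^ θ * (B ^ (-θ)) ^ n = 1 := by
    rw [← rpow_natCast_mul hB.le, ← rpow_mul_natCast hB.le, ← rpow_add hB]
    ring_nf
    exact rpow_zero B
  have hDθ : D ^ θ ≠ 0 := (rpow_pos_of_pos hD θ).ne'
  rw [hδ', div_rpow (by positivity) (by positivity), div_rpow (by positivity) hD.le,
    mul_rpow hK.le (by positivity)]
  calc _ = (K ^ (1 - θ) * K ^ θ) * (B ^ (-2 * θ + θ ^ 2) * (B ^ (-θ)) ^ θ) * (D ^ θ / D ^ θ) /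
        (12 * (B ^ n) ^ θ) := by ring
    _ = K * (B ^ (-θ)) ^ 2 * ((B ^ n) ^ θ * (B ^ (-θ)) ^ n) / (12 * (B ^ n) ^ θ) := by
        rw [hK1, hB2, div_self hDθ, hBn]
    _ = _ := by field_simp; ring

theorem pos_of_abs_le_of_deriv_ne_zero {v : ℝ → ℝ} {M c : ℝ} (hM : ∀ y, |v y| ≤ M)
    (hc : deriv v c ≠ 0) : 0 < M := by
  by_contra! hM0
  have : v = 0 := funext fun y => abs_nonpos_iff.mp ((hM y).trans hM0)
  simp [this] at hc

theorem not_holder_of_forall_exists_ge {A : ℝ → ℝ} {x c₀ θ γ : ℝ} (hc₀ : 0 < c₀) (hγ : 0 < γ)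
    (hA : ∀ ĥ : ℝ, 0 < ĥ → ∃ h : ℝ, 0 < h ∧ h < ĥ ∧ |A x - A (x + h)| ≥ c₀ * h ^ θ) :
    ¬∃ C ε' : ℝ, 0 < ε' ∧ ∀ y : ℝ, |y - x| < ε' → |A x - A y| ≤ C * |x - y| ^ (θ + γ) := by
  rintro ⟨C, ε', hε', hC⟩
  have hCγ : Tendsto (fun h : ℝ => C * h ^ γ) (𝓝 0) (𝓝 0) := by
    simpa [zero_rpow hγ.ne'] using
      ((continuousAt_rpow_const 0 γ (Or.inr hγ.le)).const_mul C).tendsto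
  have hsmall : ∀ᶠ h in 𝓝[>] 0, h < ε' ∧ C * h ^ γ < c₀ :=
    ((eventually_lt_nhds hε').and (hCγ.eventually (gt_mem_nhds hc₀))).filter_mono
      nhdsWithin_le_nhds
  obtain ⟨ĥ, hĥ, hsub⟩ := mem_nhdsGT_iff_exists_Ioo_subset.mp hsmall
  obtain ⟨h, hh0, hhĥ, hge⟩ := hA ĥ hĥ
  obtain ⟨hε'h, hCh⟩ := hsub ⟨hh0, hhĥ⟩
  have hle := hC (x + h) (by rwa [add_sub_cancel_left, abs_of_pos hh0])
  rw [show x - (x + h) = -h by ring, abs_neg, abs_of_pos hh0, rpow_add hh0] at hle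
  nlinarith [rpow_pos_of_pos hh0 θ]

theorem stmt18_general (b : ℕ) (hb : 1 < b) (θ ε : ℝ) (hθ0 : 0 < θ) (hθ1 : θ < 1)
    (hε0 : 0 < ε) (hε1 : ε ≤ 1)
    (v : ℝ → ℝ) (hv : ContDiff ℝ 1 v) (hvper : Function.Periodic v 1)
    (M M' Γ₂ : ℝ) (hΓ₂0 : 0 < Γ₂) (hM : ∀ y, |v y| ≤ M) (hM' : ∀ y, |deriv v y| ≤ M')
    (hΓ₂ : ∀ u w : ℝ, |deriv v u - deriv v w| ≤ Γ₂ * |u - w| ^ ε)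
    (c : ℝ) (hc : 0 < deriv v c)
    (δ₁ δ₂ : ℝ)
    (hδ₁ : δ₁ = 6 * M / ((1 - (b : ℝ) ^ (-θ)) * deriv v c * (b : ℝ) ^ θ))
    (hδ₂ : δ₂ = (deriv v c / (6 * Γ₂)) ^ (1 / ε))
    (hδ₁₂ : δ₁ ≤ δ₂)
    (hcond : deriv v c / 3 > 2 * M' / ((1 - (b : ℝ) ^ (θ - 1)) * (b : ℝ) ^ (1 - θ)))
    (A : ℝ → ℝ)
    (hA : A = fun x => -∑' i : ℕ,
      v ((b : ℝ) ^ i * x) * (b : ℝ) ^ (-(θ * ((i : ℝ) + 1))))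
    (c₀ : ℝ)
    (hc₀ : c₀ = (6 * M / (1 - (b : ℝ) ^ (-θ))) ^ (1 - θ) *
      (b : ℝ) ^ (-2 * θ + θ ^ 2) * (deriv v c) ^ θ / 12) :
    ∀ x : ℝ,
      (∀ y ∈ Set.Icc (0 : ℝ) 1,
        y ∈ closure (Set.range fun k : ℕ => Int.fract ((b : ℝ) ^ k * x))) →
      (∀ hhat : ℝ, 0 < hhat →
        ∃ h : ℝ, 0 < h ∧ h < hhat ∧ |A x - A (x + h)| ≥ c₀ * h ^ θ) ∧
      (∀ γ : ℝ, 0 < γ →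
        ¬∃ C ε' : ℝ, 0 < ε' ∧ ∀ y : ℝ, |y - x| < ε' →
          |A x - A y| ≤ C * |x - y| ^ (θ + γ)) := by
  intro x hx
  have hB : (1 : ℝ) < b := by exact_mod_cast hb
  set q : ℝ := (b : ℝ) ^ (-θ) with hq
  have hq0 : 0 < q := rpow_pos_of_pos (by linarith) _
  have hq1 : q < 1 := rpow_lt_one_of_one_lt_of_neg hB (by linarith)
  have hBq : (b : ℝ) * q = (b : ℝ) ^ (1 - θ) := by
    rw [hq, sub_eq_add_neg, rpow_add (by linarith), rpow_one]
  have hM0 : 0 < M := pos_of_abs_le_of_deriv_ne_zero hM hc.ne'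
  have hK : 0 < 6 * M / (1 - q) := div_pos (by linarith) (by linarith)
  have hδ₁q : δ₁ * deriv v c = 6 * M / (1 - q) * q := by
    rw [hδ₁, hq, rpow_neg (by linarith)]
    field_simp
  have hδ₂' : 6 * Γ₂ * δ₂ ^ ε = deriv v c := by
    rw [hδ₂, one_div, rpow_inv_rpow (by positivity) hε0.ne']
    field_simp
  rw [one_sub_rpow_sub_one_mul_rpow (by linarith), ← hBq, mul_div_assoc] at hcond
  have hAS : ∀ y, A y = -discountedOrbitSum v b q y := fun y => by
    simp only [hA, discountedOrbitSum, rpow_neg_mul_natCast_add_one (Nat.cast_nonneg b), ← hq]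
  have hgrowth : ∀ ĥ, 0 < ĥ → ∃ h, 0 < h ∧ h < ĥ ∧ |A x - A (x + h)| ≥ c₀ * h ^ θ := by
    intro ĥ hĥ
    have hδ₁0 : 0 < δ₁ := pos_of_mul_pos_left (hδ₁q ▸ mul_pos hK hq0) hc.le
    obtain ⟨n, hn, hle⟩ := exists_lt_le_discountedOrbitSum_sub (hv.differentiable one_ne_zero)
      hvper.deriv hM hM' hΓ₂ hΓ₂0.le hε0 hε1 hq0.le hq1
      (by rw [hBq]; exact one_lt_rpow hB (by linarith)) (by linarith) hδ₁0 hδ₁₂ hδ₂'.le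
      (by rw [mul_comm (deriv v c), hδ₁q]; field_simp [sub_ne_zero.mpr hq1.ne']) hx hĥ
    refine ⟨δ₁ / b ^ n, by positivity, hn, ?_⟩
    rw [hAS, hAS, neg_sub_neg, hc₀, const_mul_div_pow_rpow_eq (by linarith) hK hc hδ₁q]
    calc 6 * M / (1 - q) * q ^ (n + 2) / 12 = M * q ^ (n + 2) / (1 - q) / 2 := by ring
      _ ≤ M * q ^ (n + 2) / (1 - q) := half_le_self (by positivity)
      _ ≤ _ := hle.trans (le_abs_self _)
  refine ⟨hgrowth, fun γ hγ => not_holder_of_forall_exists_ge ?_ hγ hgrowth⟩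
  rw [hc₀]
  exact div_pos (mul_pos (mul_pos (rpow_pos_of_pos hK _) (rpow_pos_of_pos (by linarith) _))
    (rpow_pos_of_pos hc _)) (by norm_num)

/-- linear case, condition (A) for k₀ = 1: with `f = E_b`,
`α x = -∑' i, v(bⁱ x) b^{-θ(i+1)}`, `δ₁ = 6M/((1−b^{-θ}) v'(c) b^θ)`,
`δ₂ = (v'(c)/(6Γ₂))^{1/ε}`, `δ₁ ≤ δ₂ ≤ 1` and
`v'(c)/3 > 2M'/((1−b^{θ-1}) b^{1-θ})`, every point with dense forward orbit
(hence Lebesgue-a.e. point) admits arbitrarily small `h` with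
`|α x − α (x+h)| ≥ C₀ h^θ`, where
`C₀ = (6M/(1−b^{-θ}))^{1-θ} b^{−2θ+θ²} (v'(c))^θ / 12`. In particular `α` is not
`(θ+γ)`-Hölder at such `x` for any `γ > 0`. -/
theorem stmt18 (b : ℕ) (hb : 1 < b) (θ ε : ℝ) (hθ0 : 0 < θ) (hθ1 : θ < 1)
    (hε0 : 0 < ε) (hε1 : ε ≤ 1)
    (v : ℝ → ℝ) (hv : ContDiff ℝ 1 v) (hvper : Function.Periodic v 1)
    (M M' Γ₂ : ℝ) (hΓ₂0 : 0 < Γ₂) (hM : ∀ y, |v y| ≤ M) (hM' : ∀ y, |deriv v y| ≤ M')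
    (hΓ₂ : ∀ u w : ℝ, |deriv v u - deriv v w| ≤ Γ₂ * |u - w| ^ ε)
    (c : ℝ) (hc : 0 < deriv v c)
    (δ₁ δ₂ : ℝ)
    (hδ₁ : δ₁ = 6 * M / ((1 - (b : ℝ) ^ (-θ)) * deriv v c * (b : ℝ) ^ θ))
    (hδ₂ : δ₂ = (deriv v c / (6 * Γ₂)) ^ (1 / ε))
    (hδ₁₂ : δ₁ ≤ δ₂) (hδ₂1 : δ₂ ≤ 1)
    (hcond : deriv v c / 3 > 2 * M' / ((1 - (b : ℝ) ^ (θ - 1)) * (b : ℝ) ^ (1 - θ)))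
    (A : ℝ → ℝ)
    (hA : A = fun x => -∑' i : ℕ,
      v ((b : ℝ) ^ i * x) * (b : ℝ) ^ (-(θ * ((i : ℝ) + 1))))
    (c₀ : ℝ)
    (hc₀ : c₀ = (6 * M / (1 - (b : ℝ) ^ (-θ))) ^ (1 - θ) *
      (b : ℝ) ^ (-2 * θ + θ ^ 2) * (deriv v c) ^ θ / 12) :
    ∀ x : ℝ,
      (∀ y ∈ Set.Icc (0 : ℝ) 1,
        y ∈ closure (Set.range fun k : ℕ => Int.fract ((b : ℝ) ^ k * x))) →
      (∀ hhat : ℝ, 0 < hhat →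
        ∃ h : ℝ, 0 < h ∧ h < hhat ∧ |A x - A (x + h)| ≥ c₀ * h ^ θ) ∧
      (∀ γ : ℝ, 0 < γ →
        ¬∃ C ε' : ℝ, 0 < ε' ∧ ∀ y : ℝ, |y - x| < ε' →
          |A x - A y| ≤ C * |x - y| ^ (θ + γ)) :=
  stmt18_general b hb θ ε hθ0 hθ1 hε0 hε1 v hv hvper M M' Γ₂ hΓ₂0 hM hM' hΓ₂ c hc δ₁ δ₂ hδ₁ hδ₂ hδ₁₂
    hcond A hA c₀ hc₀
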